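/- arXiv:1305.4421 — 2 statements merged into one kernel-verified Lean document; each statement's English description precedes it below -/
import Mathlib

section
/- Let Γ be the paradigm of all i.i.d. probability measures on {0,1}^ℕ (i.e., all measures of the form ε_{δ_q} for q ∈ [0,1], under which the coordinates are i.i.d. with success probability q). Let T be the prequential test that passes the expert over realization x = (s_0,s_1,…) with forecasts (p_0,p_1,…) if and only if p_n = limsup_{k→∞} (s_0 + … + s_{k-1})/k for every n ≥ 0. Then T accepts the data-generating process in Γ with probability 1 (μ(A_μ^T) = 1 for every μ ∈ Γ), and T is strongly non-manipulable with respect to Γ: for every Borel probability measure ζ on Γ, (ζ ⊗ μ)({(ν, x) : x ∈ A_ν^T}) = 0 for co-meager many μ ∈ Γ. -/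
open MeasureTheory Filter

/-- The realization space Ω = {0,1}^ℕ. -/
abbrev Omega : Type := ℕ → Bool

/-- The cylinder set N(σ) of realizations extending the partial realization σ. -/
def cyl (σ : List Bool) : Set Omega := {x | ∀ i : Fin σ.length, x i.1 = σ.get i}

/-- The partial realization (s₀, …, s_{n-1}) consisting of the first n outcomes of x. -/
def pref (x : Omega) (n : ℕ) : List Bool := List.ofFn (fun i : Fin n => x i.1)

/-- The forecast μ(1 | σ) = μ(N(σ·1))/μ(N(σ)). -/
noncomputable def forecastOne (μ : Measure Omega) (σ : List Bool) : ℝ :=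
  (μ (cyl (σ ++ [true]))).toReal / (μ (cyl σ)).toReal

/-- ∏_{i<n} q^{s_i} (1-q)^{1-s_i} for the partial realization σ. -/
noncomputable def bern (σ : List Bool) (q : unitInterval) : ℝ :=
  ∏ i : Fin σ.length, (if σ.get i then (q : ℝ) else 1 - (q : ℝ))

/-- The paradigm of all i.i.d. theories: coordinates are i.i.d. Bernoulli(q), q ∈ [0,1]. -/
noncomputable def IIDparadigm : Set (ProbabilityMeasure Omega) :=
  {μ | ∃ q : unitInterval, ∀ σ : List Bool,
    (μ : Measure Omega) (cyl σ) = ENNReal.ofReal (bern σ q)}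

/-- The limit average limsup_k (s₀+⋯+s_{k-1})/k of a sequence of outcomes. -/
noncomputable def limAvg (s : ℕ → Bool) : ℝ :=
  Filter.limsup
    (fun k : ℕ => (∑ i ∈ Finset.range k, (if s i then (1 : ℝ) else 0)) / k) atTop

/-- The acceptance set A_μ^T : realizations over which μ passes the prequential test T. -/
def acceptSet (T : (ℕ → ℝ × Bool) → Bool) (μ : Measure Omega) : Set Omega :=
  {x | (∀ n : ℕ, 0 < μ (cyl (pref x n))) ∧
    T (fun n => (forecastOne μ (pref x n), x n)) = true}

noncomputable instance : MeasurableSpace (ProbabilityMeasure Omega) := borel _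

/-!
Every theory in the paradigm is the i.i.d. law `ε_q` of some `q ∈ [0, 1]`. Under `ε_q` the
forecasts are identically `q` and, by the strong law of large numbers, the limit frequency is
`q` almost surely, so `ε_q` passes the test. Conversely the first forecast of `ε_r` is `r`,
so the acceptance set of `ε_r` is `ε_q`-null for `q ≠ r`; hence
`(ζ ⊗ ε_q)(accepted pairs) ≤ ζ {ε_q}`, which vanishes off the countable set of atoms of `ζ`.
That set is meagre because the paradigm has no isolated points: it is connected and
nontrivial, being a continuous image of `[0, 1]`. Continuity of `q ↦ ε_q` comes from
realising all `ε_q` on one space, as the thresholds `[u_i < q]` of one i.i.d. uniform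
sequence `u`.
-/

open ProbabilityTheory Topology
open scoped ENNReal

section Meagre

variable {X : Type*} [TopologicalSpace X] [T1Space X] [PerfectSpace X]

theorem Set.Countable.isMeagre {s : Set X} (hs : s.Countable) : IsMeagre s := by
  have : Countable s := hs.to_subtype
  rw [← Set.biUnion_of_singleton s, Set.biUnion_eq_iUnion]
  refine isMeagre_iUnion fun x => IsNowhereDense.isMeagre ?_
  rw [isClosed_singleton.isNowhereDense_iff, interior_singleton]

theorem residual_setOf_measure_singleton_eq_zero [MeasurableSpace X]
    [MeasurableSingletonClass X] (ζ : Measure X) [SFinite ζ] :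
    {x | ζ {x} = 0} ∈ residual X := by
  have hpos : {x | 0 < ζ {x}}.Countable :=
    Measure.countable_meas_pos_of_disjoint_iUnion (fun x => measurableSet_singleton x)
      fun _ _ h => Set.disjoint_singleton.2 h
  simpa [IsMeagre, pos_iff_ne_zero, Set.compl_ofPred] using hpos.isMeagre

end Meagre

theorem mem_cyl_iff {x : Omega} {σ : List Bool} :
    x ∈ cyl σ ↔ ∀ i < σ.length, x i = σ.getD i false := by
  simp +contextual [cyl, Fin.forall_iff]

@[simp] theorem length_pref (x : Omega) (n : ℕ) : (pref x n).length = n := by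
  simp [pref]

theorem getD_pref (x : Omega) {n i : ℕ} (h : i < n) : (pref x n).getD i false = x i := by
  simp [pref, h]

theorem mem_cyl_pref (x : Omega) (n : ℕ) : x ∈ cyl (pref x n) :=
  mem_cyl_iff.2 fun i hi => (getD_pref x (by simpa using hi)).symm

theorem cyl_eq_pi (σ : List Bool) :
    cyl σ = Set.pi ↑(Finset.range σ.length) fun i => {σ.getD i false} := by
  ext x
  simp [mem_cyl_iff]

theorem measurableSet_cyl (σ : List Bool) : MeasurableSet (cyl σ) := by
  rw [cyl_eq_pi]
  exact .pi (Finset.countable_toSet _) fun _ _ => measurableSet_singleton _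

theorem cyl_inter_cyl_of_length_le {σ τ : List Bool} (hle : σ.length ≤ τ.length)
    (hne : (cyl σ ∩ cyl τ).Nonempty) : cyl σ ∩ cyl τ = cyl τ := by
  obtain ⟨x, hxσ, hxτ⟩ := hne
  refine Set.inter_eq_right.2 fun y hy => mem_cyl_iff.2 fun i hi => ?_
  rw [mem_cyl_iff.1 hy i (hi.trans_le hle), ← mem_cyl_iff.1 hxτ i (hi.trans_le hle),
    mem_cyl_iff.1 hxσ i hi]

theorem isPiSystem_range_cyl : IsPiSystem (Set.range cyl) := by
  rintro _ ⟨σ, rfl⟩ _ ⟨τ, rfl⟩ hne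
  rcases le_total σ.length τ.length with h | h
  · exact ⟨τ, (cyl_inter_cyl_of_length_le h hne).symm⟩
  · rw [Set.inter_comm] at hne ⊢
    exact ⟨σ, (cyl_inter_cyl_of_length_le h hne).symm⟩

theorem setOf_apply_eq_eq_biUnion_cyl (i : ℕ) (b : Bool) :
    {x : Omega | x i = b} =
      ⋃ σ ∈ {σ : List Bool | i < σ.length ∧ σ.getD i false = b}, cyl σ := by
  ext x
  simp only [Set.mem_ofPred_eq, Set.mem_iUnion, exists_prop]
  constructor
  · rintro rfl
    exact ⟨pref x (i + 1), ⟨by simp, getD_pref x (Nat.lt_succ_self i)⟩, mem_cyl_pref x _⟩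
  · rintro ⟨σ, ⟨hi, rfl⟩, hx⟩
    exact mem_cyl_iff.1 hx i hi

theorem measurableSpace_eq_generateFrom_range_cyl :
    (inferInstance : MeasurableSpace Omega) = .generateFrom (Set.range cyl) := by
  refine le_antisymm (iSup_le fun i => Measurable.comap_le ?_)
    (MeasurableSpace.generateFrom_le ?_)
  · refine @measurable_to_countable' _ _ _ _ (.generateFrom _) _ fun b => ?_
    change MeasurableSet[.generateFrom (Set.range cyl)] {x : Omega | x i = b}
    rw [setOf_apply_eq_eq_biUnion_cyl]
    exact .biUnion (Set.to_countable _) fun σ _ => .basic _ ⟨σ, rfl⟩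
  · rintro _ ⟨σ, rfl⟩
    exact measurableSet_cyl σ

theorem ext_of_cyl {μ ν : Measure Omega} [IsFiniteMeasure μ]
    (h : ∀ σ, μ (cyl σ) = ν (cyl σ)) : μ = ν := by
  refine ext_of_generate_finite _ measurableSpace_eq_generateFrom_range_cyl
    isPiSystem_range_cyl (fun _ ⟨σ, hσ⟩ => hσ ▸ h σ) ?_
  simpa [cyl] using h []

theorem measurable_decide_lt {α : Type*} [TopologicalSpace α] [LinearOrder α]
    [OrderClosedTopology α] [MeasurableSpace α] [OpensMeasurableSpace α] (q : α) :
    Measurable fun u : α => decide (u < q) :=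
  measurable_to_bool <| by
    convert (measurableSet_Iio : MeasurableSet (Set.Iio q))
    ext u
    simp

section Bernoulli

theorem ite_coe_one_sub_nonneg (b : Bool) (q : unitInterval) :
    0 ≤ if b then (q : ℝ) else 1 - q := by
  split
  exacts [unitInterval.nonneg q, unitInterval.one_minus_nonneg q]

theorem bern_nonneg (σ : List Bool) (q : unitInterval) : 0 ≤ bern σ q :=
  Finset.prod_nonneg fun _ _ => ite_coe_one_sub_nonneg _ q

theorem bern_eq_prod_range (σ : List Bool) (q : unitInterval) :
    bern σ q = ∏ i ∈ Finset.range σ.length, if σ.getD i false then (q : ℝ) else 1 - q := by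
  rw [bern, ← Fin.prod_univ_eq_prod_range]
  simp

theorem bern_append_true (σ : List Bool) (q : unitInterval) :
    bern (σ ++ [true]) q = bern σ q * q := by
  rw [bern_eq_prod_range, bern_eq_prod_range, List.length_append, List.length_singleton,
    Finset.prod_range_succ]
  congr 1
  · exact Finset.prod_congr rfl fun i hi => by
      rw [List.getD_append _ _ _ _ (Finset.mem_range.1 hi)]
  · simp

theorem bern_singleton_true (q : unitInterval) : bern [true] q = q := by
  simp [bern]

variable (q : unitInterval)

theorem bernoulliMeasure_singleton (b : Bool) :
    Ber(true, false, q) {b} = ENNReal.ofReal (if b then (q : ℝ) else 1 - q) := by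
  have h (p : unitInterval) : (unitInterval.toNNReal p : ℝ≥0∞) = ENNReal.ofReal p := by
    rw [← ENNReal.ofReal_coe_nnreal, unitInterval.coe_toNNReal]
  cases b <;> simp [h, unitInterval.coe_symm_eq]

theorem map_decide_lt_volume :
    (volume : Measure unitInterval).map (fun u => decide (u < q)) = Ber(true, false, q) := by
  refine Measure.ext_iff_singleton.2 fun b => ?_
  rw [Measure.map_apply (measurable_decide_lt q) (measurableSet_singleton b),
    bernoulliMeasure_singleton]
  cases b
  · rw [show (fun u => decide (u < q)) ⁻¹' {false} = Set.Ici q by ext; simp,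
      unitInterval.volume_Ici]
    simp
  · rw [show (fun u => decide (u < q)) ⁻¹' {true} = Set.Iio q by ext; simp,
      unitInterval.volume_Iio]
    simp

noncomputable def iidMeasure : Measure Omega :=
  Measure.infinitePi fun _ => Ber(true, false, q)

instance : IsProbabilityMeasure (iidMeasure q) := by
  unfold iidMeasure
  infer_instance

theorem iidMeasure_eq_map :
    iidMeasure q = (Measure.infinitePi fun _ : ℕ => volume).map fun u i => decide (u i < q) := by
  rw [Measure.infinitePi_map_pi _ fun _ => measurable_decide_lt q, map_decide_lt_volume, iidMeasure]

theorem iidMeasure_cyl (σ : List Bool) :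
    iidMeasure q (cyl σ) = ENNReal.ofReal (bern σ q) := by
  rw [iidMeasure, cyl_eq_pi, Measure.infinitePi_pi _ fun _ _ => measurableSet_singleton _,
    bern_eq_prod_range, ENNReal.ofReal_prod_of_nonneg fun _ _ => ite_coe_one_sub_nonneg _ q]
  simp only [bernoulliMeasure_singleton]

theorem ae_tendsto_average_iidMeasure :
    ∀ᵐ x ∂iidMeasure q, Tendsto
      (fun k : ℕ => (∑ i ∈ Finset.range k, if x i then (1 : ℝ) else 0) / (k : ℝ)) atTop
      (𝓝 (q : ℝ)) := by
  set g : Bool → ℝ := fun b => if b then 1 else 0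
  have hg : Measurable g := measurable_of_countable g
  have hindep : iIndepFun (fun i (x : Omega) => g (x i)) (iidMeasure q) :=
    iIndepFun_infinitePi fun _ => hg
  have hident (i : ℕ) : IdentDistrib (fun x : Omega => g (x i)) (fun x => g (x 0))
      (iidMeasure q) (iidMeasure q) := by
    refine IdentDistrib.comp (f := fun x : Omega => x i) (g := fun x : Omega => x 0)
      ⟨(measurable_pi_apply i).aemeasurable, (measurable_pi_apply 0).aemeasurable, ?_⟩ hg
    rw [iidMeasure, Measure.infinitePi_map_eval, Measure.infinitePi_map_eval]
  have hmean : ∫ x, g (x 0) ∂iidMeasure q = q := by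
    rw [← integral_map (measurable_pi_apply 0).aemeasurable hg.aestronglyMeasurable, iidMeasure,
      Measure.infinitePi_map_eval, integral_bernoulliMeasure]
    simp [g]
  have hint : Integrable (fun x : Omega => g (x 0)) (iidMeasure q) :=
    .of_bound (hg.comp (measurable_pi_apply 0)).aestronglyMeasurable 1
      (ae_of_all _ fun x => by cases x 0 <;> simp [g])
  have := strong_law_ae_real (fun i (x : Omega) => g (x i)) hint
    (fun i j hij => hindep.indepFun hij) hident
  rwa [hmean] at this

end Bernoulli

theorem eventually_decide_lt_eq {α : Type*} [TopologicalSpace α] [LinearOrder α]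
    [OrderClosedTopology α] {a q : α} (h : a ≠ q) :
    ∀ᶠ t in 𝓝 q, decide (a < t) = decide (a < q) := by
  rcases h.lt_or_gt with h | h
  · filter_upwards [isOpen_Ioi.mem_nhds h] with t (ht : a < t)
    simp [ht, h]
  · filter_upwards [isOpen_Iio.mem_nhds h] with t (ht : t < a)
    simp [ht.not_gt, h.not_gt]

noncomputable def iidProb (q : unitInterval) : ProbabilityMeasure Omega :=
  ⟨iidMeasure q, inferInstance⟩

theorem continuous_iidProb : Continuous iidProb := by
  set P := Measure.infinitePi fun _ : ℕ => (volume : Measure unitInterval)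
  have hF (q : unitInterval) :
      Measurable (fun u i => decide (u i < q) : (ℕ → unitInterval) → Omega) :=
    measurable_pi_lambda _ fun i => (measurable_decide_lt q).comp (measurable_pi_apply i)
  refine continuous_iff_continuousAt.2 fun q => ?_
  -- Off the null set where some `u i` equals `q`, each `[u i < t]` is locally constant near `q`.
  have hP : ∀ᵐ u ∂P, ∀ i, u i ≠ q := ae_all_iff.2 fun i =>
    ae_of_ae_map (measurable_pi_apply i).aemeasurable <| by
      rw [Measure.infinitePi_map_eval (fun _ : ℕ => (volume : Measure unitInterval))]
      exact compl_mem_ae_iff.2 (measure_singleton q)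
  have hae : ∀ᵐ u ∂P, Tendsto (fun t : unitInterval => fun i => decide (u i < t)) (𝓝 q)
      (𝓝 fun i => decide (u i < q)) := by
    filter_upwards [hP] with u hu
    exact tendsto_pi_nhds.2 fun i =>
      tendsto_nhds_of_eventually_eq (eventually_decide_lt_eq (hu i))
  have h := (tendstoInDistribution_of_ae_tendsto (fun t => (hF t).aemeasurable)
    (hF q).aemeasurable hae).tendsto
  have hmap : iidProb = fun t => ⟨P.map fun u i => decide (u i < t),
      Measure.isProbabilityMeasure_map (hF t).aemeasurable⟩ :=
    funext fun t => Subtype.ext (iidMeasure_eq_map t)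
  rw [ContinuousAt, hmap]
  exact h

theorem eq_iidMeasure_of_cyl {μ : Measure Omega} {q : unitInterval}
    (h : ∀ σ, μ (cyl σ) = ENNReal.ofReal (bern σ q)) : μ = iidMeasure q :=
  (ext_of_cyl fun σ => by rw [iidMeasure_cyl, h]).symm

theorem iidProb_mem_IIDparadigm (q : unitInterval) : iidProb q ∈ IIDparadigm :=
  ⟨q, iidMeasure_cyl q⟩

theorem mem_IIDparadigm_iff {μ : ProbabilityMeasure Omega} :
    μ ∈ IIDparadigm ↔ ∃ q, μ = iidProb q := by
  constructor
  · rintro ⟨q, hq⟩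
    exact ⟨q, Subtype.ext (eq_iidMeasure_of_cyl hq)⟩
  · rintro ⟨q, rfl⟩
    exact iidProb_mem_IIDparadigm q

theorem IIDparadigm_eq_range : IIDparadigm = Set.range iidProb := by
  ext μ
  rw [mem_IIDparadigm_iff]
  simp [eq_comm]

theorem iidProb_injective : Function.Injective iidProb := by
  intro s t h
  have := congrArg (fun μ : ProbabilityMeasure Omega => (μ : Measure Omega) (cyl [true])) h
  simp only [iidProb, ProbabilityMeasure.coe_mk, iidMeasure_cyl, bern_singleton_true] at this
  exact Subtype.ext ((ENNReal.ofReal_eq_ofReal_iff s.2.1 t.2.1).1 this)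

instance : BorelSpace (ProbabilityMeasure Omega) := ⟨rfl⟩

instance : ConnectedSpace IIDparadigm :=
  Subtype.connectedSpace (IIDparadigm_eq_range ▸ isConnected_range continuous_iidProb)

instance : Nontrivial IIDparadigm :=
  ⟨⟨iidProb 0, iidProb_mem_IIDparadigm 0⟩, ⟨iidProb 1, iidProb_mem_IIDparadigm 1⟩,
    fun h => zero_ne_one (iidProb_injective (congrArg Subtype.val h))⟩

theorem ae_limAvg_eq_iidMeasure (q : unitInterval) :
    ∀ᵐ x ∂iidMeasure q, limAvg x = q :=
  (ae_tendsto_average_iidMeasure q).mono fun _ hx => hx.limsup_eq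

theorem forecastOne_iidMeasure {q : unitInterval} {σ : List Bool}
    (hσ : 0 < iidMeasure q (cyl σ)) : forecastOne (iidMeasure q) σ = q := by
  rw [iidMeasure_cyl, ENNReal.ofReal_pos] at hσ
  rw [forecastOne, iidMeasure_cyl, iidMeasure_cyl, bern_append_true,
    ENNReal.toReal_ofReal (mul_nonneg (bern_nonneg σ q) q.2.1),
    ENNReal.toReal_ofReal (bern_nonneg σ q)]
  field_simp

theorem ae_forall_measure_cyl_pref_pos (μ : Measure Omega) :
    ∀ᵐ x ∂μ, ∀ n, 0 < μ (cyl (pref x n)) := by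
  have hnull : μ (⋃ σ ∈ {σ | μ (cyl σ) = 0}, cyl σ) = 0 :=
    (measure_biUnion_null_iff (Set.to_countable _)).2 fun σ hσ => hσ
  refine ae_all_iff.2 fun n => ae_iff.2 <| measure_mono_null (fun x hx => ?_) hnull
  exact Set.mem_biUnion (by simpa using hx) (mem_cyl_pref x n)

section Acceptance

variable {T : (ℕ → ℝ × Bool) → Bool}
  (hT : ∀ f : ℕ → ℝ × Bool,
    T f = true ↔ ∀ n : ℕ, (f n).1 = limAvg (fun k => (f k).2))
include hT

theorem mem_acceptSet_iff {μ : Measure Omega} {x : Omega} :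
    x ∈ acceptSet T μ ↔
      (∀ n, 0 < μ (cyl (pref x n))) ∧ ∀ n, forecastOne μ (pref x n) = limAvg x := by
  rw [acceptSet, Set.mem_ofPred_eq, hT]

theorem measure_acceptSet_iidMeasure (q : unitInterval) :
    iidMeasure q (acceptSet T (iidMeasure q)) = 1 := by
  have h : ∀ᵐ x ∂iidMeasure q, x ∈ acceptSet T (iidMeasure q) := by
    filter_upwards [ae_forall_measure_cyl_pref_pos (iidMeasure q), ae_limAvg_eq_iidMeasure q]
      with x hpos hlim
    exact (mem_acceptSet_iff hT).2
      ⟨hpos, fun n => by rw [forecastOne_iidMeasure (hpos n), hlim]⟩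
  exact (measure_congr (ae_eq_univ.2 h)).trans measure_univ

theorem limAvg_eq_of_mem_acceptSet {q : unitInterval} {x : Omega}
    (hx : x ∈ acceptSet T (iidMeasure q)) : limAvg x = q := by
  obtain ⟨hpos, hforecast⟩ := (mem_acceptSet_iff hT).1 hx
  rw [← hforecast 0, forecastOne_iidMeasure (hpos 0)]

theorem measure_prod_setOf_mem_acceptSet_eq_zero (ζ : Measure IIDparadigm) [SFinite ζ]
    {μ : IIDparadigm} (hμ : ζ {μ} = 0) :
    (ζ.prod (μ.1 : Measure Omega))
      {p : IIDparadigm × Omega | p.2 ∈ acceptSet T (p.1.1 : Measure Omega)} = 0 := by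
  obtain ⟨t, ht⟩ := mem_IIDparadigm_iff.1 μ.2
  have hsub : {p : IIDparadigm × Omega | p.2 ∈ acceptSet T (p.1.1 : Measure Omega)} ⊆
      {μ} ×ˢ Set.univ ∪ Set.univ ×ˢ {x | limAvg x ≠ t} := by
    rintro ⟨ν, x⟩ (hx : x ∈ acceptSet T (ν.1 : Measure Omega))
    by_cases hν : ν = μ
    · exact Or.inl ⟨hν, trivial⟩
    obtain ⟨r, hr⟩ := mem_IIDparadigm_iff.1 ν.2
    refine Or.inr ⟨trivial, fun hxt => hν (Subtype.ext ?_)⟩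
    rw [hr] at hx
    have hxr : limAvg x = r := limAvg_eq_of_mem_acceptSet hT hx
    rw [hr, ht, Subtype.ext (hxr.symm.trans hxt)]
  refine measure_mono_null hsub (measure_union_null ?_ ?_) <;> rw [Measure.prod_prod]
  · rw [hμ, zero_mul]
  · rw [ht]
    exact mul_eq_zero_of_right _ (ae_limAvg_eq_iidMeasure t)

end Acceptance

/-- Example 1: the test that passes the expert iff every forecast equals the limsup
empirical frequency accepts every i.i.d. data generating process with probability 1 and
is strongly non-manipulable w.r.t. the paradigm of i.i.d. theories. -/
theorem iid_paradigm_test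
    (T : (ℕ → ℝ × Bool) → Bool)
    (hT : ∀ f : ℕ → ℝ × Bool,
      T f = true ↔ ∀ n : ℕ, (f n).1 = limAvg (fun k => (f k).2)) :
    (∀ μ : ProbabilityMeasure Omega, μ ∈ IIDparadigm →
      (μ : Measure Omega) (acceptSet T (μ : Measure Omega)) = 1) ∧
    (∀ ζ : Measure {μ : ProbabilityMeasure Omega // μ ∈ IIDparadigm},
      IsProbabilityMeasure ζ →
      {μ : {μ : ProbabilityMeasure Omega // μ ∈ IIDparadigm} |
          (ζ.prod (μ.1 : Measure Omega))
            {p : {μ : ProbabilityMeasure Omega // μ ∈ IIDparadigm} × Omega |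
              p.2 ∈ acceptSet T (p.1.1 : Measure Omega)} = 0}
        ∈ residual {μ : ProbabilityMeasure Omega // μ ∈ IIDparadigm}) := by
  refine ⟨fun μ hμ => ?_, fun ζ _ => ?_⟩
  · obtain ⟨q, rfl⟩ := mem_IIDparadigm_iff.1 hμ
    exact measure_acceptSet_iidMeasure hT q
  · exact mem_of_superset (residual_setOf_measure_singleton_eq_zero ζ)
      fun μ hμ => measure_prod_setOf_mem_acceptSet_eq_zero hT ζ hμ
end

section
/- Let λ' and λ'' be Borel probability measures on [0,1], and suppose there exists a sequence (s_0, s_1, …) ∈ {0,1}^ℕ such that ∫ ∏_{i=0}^{n-1} q^{s_i}(1−q)^{1−s_i} λ'(dq) = ∫ ∏_{i=0}^{n-1} q^{s_i}(1−q)^{1−s_i} λ''(dq) for every n ∈ ℕ. Then ∫ q^n λ'(dq) = ∫ q^n λ''(dq) for every n ∈ ℕ, and consequently λ' = λ''. -/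
/-!
The polynomial `∏_{i<n} (s_i ? q : 1 - q)` has degree exactly `n`, so these polynomials span
`ℝ[X]`; hence `p ↦ ∫ p(q) dλ(q)` is the same linear functional for `λ'` and `λ''`, which gives
the moments. By Weierstrass, polynomials are dense in `C([0,1], ℝ)` and integration against a
finite measure is continuous there, so the integrals of all continuous functions agree, and
this determines a finite Borel measure.
-/

open MeasureTheory Polynomial

theorem Polynomial.span_range_eq_top_of_degree_eq {K : Type*} [Field K] {P : ℕ → K[X]}
    (hP : ∀ n, (P n).degree = n) : Submodule.span K (Set.range P) = ⊤ := by
  have hlt : ∀ n, degreeLT K n ≤ Submodule.span K (Set.range P) := by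
    intro n
    induction n with
    | zero =>
      intro p hp
      rw [mem_degreeLT, Nat.cast_zero, Nat.WithBot.lt_zero_iff, degree_eq_bot] at hp
      simp [hp]
    | succ n ih =>
      intro p hp
      have hPn : (P n).natDegree = n := natDegree_eq_of_degree_eq_some (hP n)
      have hlead : (P n).coeff n = (P n).leadingCoeff := by rw [leadingCoeff, hPn]
      have hlead0 : (P n).leadingCoeff ≠ 0 :=
        leadingCoeff_ne_zero.2 (ne_zero_of_degree_gt (n := ⊥) (by simp [hP n]))
      set c := p.coeff n / (P n).leadingCoeff
      rw [mem_degreeLT, degree_lt_iff_coeff_zero] at hp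
      have hrem : p - c • P n ∈ degreeLT K n := by
        rw [mem_degreeLT, degree_lt_iff_coeff_zero]
        intro m hm
        rw [coeff_sub, coeff_smul, smul_eq_mul]
        rcases hm.eq_or_lt with rfl | hm
        · rw [hlead, div_mul_cancel₀ _ hlead0, sub_self]
        · rw [hp m (by exact_mod_cast hm), coeff_eq_zero_of_natDegree_lt (by rwa [hPn]), mul_zero,
            sub_zero]
      simpa using Submodule.add_mem _ (ih hrem)
        (Submodule.smul_mem _ c (Submodule.subset_span ⟨n, rfl⟩))
  refine eq_top_iff.2 fun p _ => hlt (p.natDegree + 1) (mem_degreeLT.2 ?_)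
  exact degree_le_natDegree.trans_lt (by exact_mod_cast Nat.lt_succ_self _)

section BernoulliPrefix

variable {R : Type*} [CommRing R] (s : ℕ → Bool)

/-- Evaluated at `q`, the probability that `n` independent Bernoulli(`q`) trials come out as
`s 0, …, s (n - 1)`. -/
noncomputable def bernoulliPrefixPoly (n : ℕ) : R[X] :=
  ∏ i ∈ Finset.range n, if s i then X else 1 - X

theorem degree_bernoulliPrefixPoly [IsDomain R] (n : ℕ) :
    (bernoulliPrefixPoly s n : R[X]).degree = n := by
  have hfactor : ∀ i, (if s i then X else 1 - X : R[X]).degree = 1 := by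
    intro i
    split_ifs
    · exact degree_X
    · rw [← neg_sub, degree_neg, ← C_1, degree_X_sub_C]
  simp [bernoulliPrefixPoly, degree_prod, hfactor]

theorem eval_bernoulliPrefixPoly (n : ℕ) (q : R) :
    (bernoulliPrefixPoly s n).eval q = ∏ i ∈ Finset.range n, if s i then q else 1 - q := by
  simp [bernoulliPrefixPoly, eval_prod, apply_ite]

end BernoulliPrefix

theorem continuous_integral_continuousMap {X : Type*} [TopologicalSpace X] [CompactSpace X]
    [MeasurableSpace X] [BorelSpace X] (μ : Measure X) [IsFiniteMeasure μ] :
    Continuous fun f : C(X, ℝ) => ∫ x, f x ∂μ := by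
  have : (fun f : C(X, ℝ) => ∫ x, f x ∂μ) =
      (fun g : X →₁[μ] ℝ => ∫ x, g x ∂μ) ∘ ContinuousMap.toLp 1 μ ℝ := by
    funext f
    exact (integral_congr_ae (ContinuousMap.coeFn_toLp μ f)).symm
  rw [this]
  exact continuous_integral.comp (ContinuousMap.toLp 1 μ ℝ).continuous

section PolynomialIntegral

variable (μ : Measure unitInterval) [IsFiniteMeasure μ]

theorem integrable_polynomial_eval (p : ℝ[X]) :
    Integrable (fun q : unitInterval => p.eval (q : ℝ)) μ :=
  (p.continuous.comp continuous_subtype_val).integrable_of_hasCompactSupport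
    (HasCompactSupport.of_compactSpace _)

noncomputable def polynomialIntegral : ℝ[X] →ₗ[ℝ] ℝ where
  toFun p := ∫ q, p.eval (q : ℝ) ∂μ
  map_add' p r := by
    simp only [eval_add]
    exact integral_add (integrable_polynomial_eval μ p) (integrable_polynomial_eval μ r)
  map_smul' c p := by
    simp only [eval_smul, smul_eq_mul, RingHom.id_apply]
    exact integral_const_mul c _

theorem polynomialIntegral_apply (p : ℝ[X]) :
    polynomialIntegral μ p = ∫ q, p.eval (q : ℝ) ∂μ := rfl

end PolynomialIntegral

theorem ext_of_polynomialIntegral_eq {μ ν : Measure unitInterval} [IsFiniteMeasure μ]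
    [IsFiniteMeasure ν] (h : polynomialIntegral μ = polynomialIntegral ν) : μ = ν := by
  have hcont : ∀ f : C(unitInterval, ℝ), ∫ q, f q ∂μ = ∫ q, f q ∂ν := by
    intro f
    have hpoly : (polynomialFunctions unitInterval : Set C(unitInterval, ℝ)) ⊆
        {g | ∫ q, g q ∂μ = ∫ q, g q ∂ν} := by
      rw [polynomialFunctions_coe]
      rintro _ ⟨p, rfl⟩
      exact LinearMap.congr_fun h p
    have hf : f ∈ closure (polynomialFunctions unitInterval : Set C(unitInterval, ℝ)) := by
      rw [← Subalgebra.topologicalClosure_coe, polynomialFunctions_closure_eq_top']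
      trivial
    exact closure_minimal hpoly (isClosed_eq (continuous_integral_continuousMap μ)
      (continuous_integral_continuousMap ν)) hf
  exact ext_of_forall_integral_eq_of_IsFiniteMeasure fun f => hcont f.toContinuousMap

/-- Two Borel probability measures on [0,1] whose integrals of
∏_{i<n} q^{s_i}(1-q)^{1-s_i} agree along a single sequence (s₀,s₁,…) of outcomes have
the same moments, and are therefore equal. -/
theorem equal_bernoulli_integrals_imp_equal_measures
    (lam' lam'' : Measure unitInterval)
    [IsProbabilityMeasure lam'] [IsProbabilityMeasure lam'']
    (s : ℕ → Bool)
    (h : ∀ n : ℕ,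
      (∫ q, (∏ i ∈ Finset.range n, (if s i then (q : ℝ) else 1 - (q : ℝ))) ∂lam') =
      (∫ q, (∏ i ∈ Finset.range n, (if s i then (q : ℝ) else 1 - (q : ℝ))) ∂lam'')) :
    (∀ n : ℕ, (∫ q, ((q : ℝ) ^ n) ∂lam') = ∫ q, ((q : ℝ) ^ n) ∂lam'') ∧
    lam' = lam'' := by
  have hpoly : polynomialIntegral lam' = polynomialIntegral lam'' :=
    LinearMap.ext_on_range (span_range_eq_top_of_degree_eq (degree_bernoulliPrefixPoly s))
      fun n => by simpa only [polynomialIntegral_apply, eval_bernoulliPrefixPoly] using h n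
  refine ⟨fun n => ?_, ext_of_polynomialIntegral_eq hpoly⟩
  simpa only [polynomialIntegral_apply, eval_pow, eval_X] using LinearMap.congr_fun hpoly (X ^ n)
end
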